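/- arXiv:1611.04096 — 6 statements merged into one kernel-verified Lean document; each statement's English description precedes it below -/
import Mathlib

section
/- Let G be a finite abelian group and g an element of G. Define the function Φ̃_g : G × G → k* by Φ̃_g(e,f) = Φ(g,e,f)·Φ(e,f,g)/Φ(e,g,f), where Φ is a normalized 3-cocycle on G with values in the multiplicative group k* of a field k. Then Φ̃_g is a 2-cocycle on G, i.e., Φ̃_g(f,h)·Φ̃_g(e,fh) = Φ̃_g(ef,h)·Φ̃_g(e,f) for all e,f,h ∈ G. -/
theorem threeCocycle_twist_cocycle₂ {G M : Type*} [CommGroup G] [CommGroup M]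
    (Φ : G → G → G → M)
    (hΦ : ∀ a b c d : G,
      Φ b c d * Φ a (b * c) d * Φ a b c = Φ (a * b) c d * Φ a b (c * d)) (g e f h : G) :
    (Φ g f h * Φ f h g / Φ f g h) * (Φ g e (f * h) * Φ e (f * h) g / Φ e g (f * h)) =
      (Φ g (e * f) h * Φ (e * f) h g / Φ (e * f) g h) * (Φ g e f * Φ e f g / Φ e g f) := by
  have h₁ := hΦ e g f h
  have h₂ := hΦ e f h g
  have h₃ := hΦ g e f h
  have h₄ := hΦ e f g h
  rw [mul_comm g f] at h₁
  rw [mul_comm h g] at h₂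
  rw [mul_comm g e] at h₃
  -- In `Additive M` the goal is linear in the values of `Φ`: it is h₁ + h₂ - h₃ - h₄.
  apply Additive.ofMul.injective
  apply_fun Additive.ofMul at h₁ h₂ h₃ h₄
  simp only [ofMul_mul, ofMul_div] at *
  linear_combination (norm := abel) h₁ + h₂ - h₃ - h₄

theorem stmt_1_general {k : Type*} [Field k] {G : Type*} [CommGroup G]
    (Φ : G → G → G → kˣ)
    (hcocycle : ∀ a b c d : G,
      Φ b c d * Φ a (b * c) d * Φ a b c = Φ (a * b) c d * Φ a b (c * d))
    (g : G) :
    ∀ e f h : G,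
      (Φ g f h * Φ f h g / Φ f g h) * (Φ g e (f * h) * Φ e (f * h) g / Φ e g (f * h)) =
      (Φ g (e * f) h * Φ (e * f) h g / Φ (e * f) g h) * (Φ g e f * Φ e f g / Φ e g f) :=
  threeCocycle_twist_cocycle₂ Φ hcocycle g

/-- If `Φ` is a normalized 3-cocycle on a finite abelian group `G` with values in `kˣ`
(trivial action), then for each `g : G` the function
`Φ̃_g(e,f) = Φ(g,e,f)·Φ(e,f,g)/Φ(e,g,f)` is a 2-cocycle on `G`. -/
theorem stmt_1 {k : Type*} [Field k] [CharZero k] {G : Type*} [CommGroup G] [Fintype G]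
    (Φ : G → G → G → kˣ)
    (hcocycle : ∀ a b c d : G,
      Φ b c d * Φ a (b * c) d * Φ a b c = Φ (a * b) c d * Φ a b (c * d))
    (hnorm : ∀ a b : G, Φ a 1 b = 1) (g : G) :
    ∀ e f h : G,
      (Φ g f h * Φ f h g / Φ f g h) * (Φ g e (f * h) * Φ e (f * h) g / Φ e g (f * h)) =
      (Φ g (e * f) h * Φ (e * f) h g / Φ (e * f) g h) * (Φ g e f * Φ e f g / Φ e g f) :=
  stmt_1_general Φ hcocycle g
end

section
/- Let G = Z_{m_1} × ⋯ × Z_{m_n} be a finite abelian group written with fixed generators g_1,…,g_n of orders m_1,…,m_n. For a sequence a consisting of integers a_l (1 ≤ l ≤ n), a_{st} (1 ≤ s < t ≤ n), and a_{rst} (1 ≤ r < s < t ≤ n), define Φ_a(g₁^{i₁}⋯g_n^{i_n}, g₁^{j₁}⋯g_n^{j_n}, g₁^{k₁}⋯g_n^{k_n}) = ∏_{l=1}^n ζ_{m_l}^{a_l · i_l · ⌊(j_l+k_l)/m_l⌋} · ∏_{s<t} ζ_{m_t}^{a_{st} · i_t · ⌊(j_s+k_s)/m_s⌋} · ∏_{r<s<t}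 ζ_{(m_r,m_s,m_t)}^{−a_{rst} · k_r · j_s · i_t}, where all exponents i_l, j_l, k_l lie in {0,…,m_l−1}, ζ_m denotes a fixed primitive m-th root of unity, and (m_r,m_s,m_t) is the gcd. Then Φ_a is a normalized 3-cocycle on G. -/
open Finset

/-- A fixed primitive `m`-th root of unity in `ℂ`. -/
noncomputable def zeta (m : ℕ) : ℂ :=
  Complex.exp (2 * (Real.pi : ℂ) * Complex.I / (m : ℂ))

/-- The 3-cochain `Φ_a` on `G = Z_{m_1} × ⋯ × Z_{m_n}` given by the standard formula. -/
noncomputable def Phi3 {n : ℕ} (m : Fin n → ℕ)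
    (a1 : Fin n → ℕ) (a2 : Fin n → Fin n → ℕ) (a3 : Fin n → Fin n → Fin n → ℕ)
    (x y z : ∀ l, ZMod (m l)) : ℂ :=
  (∏ l, zeta (m l) ^ (a1 l * (x l).val * (((y l).val + (z l).val) / m l))) *
  (∏ s, ∏ t, if s < t then
      zeta (m t) ^ (a2 s t * (x t).val * (((y s).val + (z s).val) / m s)) else 1) *
  (∏ r, ∏ s, ∏ t, if r < s ∧ s < t then
      zeta (Nat.gcd (Nat.gcd (m r) (m s)) (m t)) ^
        (-((a3 r s t * (z r).val * (y s).val * (x t).val : ℕ) : ℤ)) else 1)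

lemma zeta_pow_self (m : ℕ) (hm : m ≠ 0) : zeta m ^ m = 1 :=
  (Complex.isPrimitiveRoot_exp m hm).pow_eq_one

lemma my_div_trich (m u v : ℕ) (hm : 0 < m) : (u + v) / m = u / m + (u % m + v) / m := by
  conv_lhs => rw [← Nat.mod_add_div u m]
  rw [show u % m + m * (u / m) + v = m * (u / m) + (u % m + v) by ring, Nat.mul_add_div hm]

lemma my_zpow_eq_of_dvd (ζ : ℂ) (hζ0 : ζ ≠ 0) (g : ℕ) (hζ : ζ ^ g = 1) (k k' : ℤ)
    (h : (g : ℤ) ∣ k - k') : ζ ^ k = ζ ^ k' := by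
  obtain ⟨t, ht⟩ := h
  have hk : k = k' + (g : ℤ) * t := by linarith
  rw [hk, zpow_add₀ hζ0, zpow_mul, zpow_natCast, hζ, one_zpow, mul_one]

lemma key2 (ζ : ℂ) (ms mt A αt βt βs γs δs : ℕ) (hms : 0 < ms) (hζ : ζ ^ mt = 1) :
    ζ ^ (A * βt * ((γs + δs) / ms)) * ζ ^ (A * αt * (((βs + γs) % ms + δs) / ms)) *
      ζ ^ (A * αt * ((βs + γs) / ms)) =
    ζ ^ (A * ((αt + βt) % mt) * ((γs + δs) / ms)) *
      ζ ^ (A * αt * ((βs + (γs + δs) % ms) / ms)) := by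
  have h1 : (βs + γs + δs) / ms = (βs + γs) / ms + ((βs + γs) % ms + δs) / ms :=
    my_div_trich ms (βs + γs) δs hms
  have h2 : (βs + γs + δs) / ms = (γs + δs) / ms + (βs + (γs + δs) % ms) / ms := by
    rw [show βs + γs + δs = γs + δs + βs by ring, my_div_trich ms (γs + δs) βs hms,
      Nat.add_comm ((γs + δs) % ms) βs]
  have h3 : (αt + βt) % mt + mt * ((αt + βt) / mt) = αt + βt := Nat.mod_add_div _ _
  have h1c := congrArg (Nat.cast (R := ℤ)) h1
  have h2c := congrArg (Nat.cast (R := ℤ)) h2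
  have h3c := congrArg (Nat.cast (R := ℤ)) h3
  simp only [Nat.cast_add, Nat.cast_mul] at h1c h2c h3c
  have hP : ((((βs + γs) % ms + δs) / ms : ℕ) : ℤ) =
      (((βs + γs + δs) / ms : ℕ) : ℤ) - (((βs + γs) / ms : ℕ) : ℤ) := by linarith
  have hR : (((βs + (γs + δs) % ms) / ms : ℕ) : ℤ) =
      (((βs + γs + δs) / ms : ℕ) : ℤ) - (((γs + δs) / ms : ℕ) : ℤ) := by linarith
  have hS : ((((αt + βt) % mt) : ℕ) : ℤ) =
      (αt : ℤ) + (βt : ℤ) - (mt : ℤ) * (((αt + βt) / mt : ℕ) : ℤ) := by linarith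
  have hE : A * βt * ((γs + δs) / ms) + A * αt * (((βs + γs) % ms + δs) / ms) +
      A * αt * ((βs + γs) / ms) =
      A * ((αt + βt) % mt) * ((γs + δs) / ms) + A * αt * ((βs + (γs + δs) % ms) / ms) +
      mt * (A * ((αt + βt) / mt) * ((γs + δs) / ms)) := by
    refine (Nat.cast_inj (R := ℤ)).mp ?_
    simp only [Nat.cast_add, Nat.cast_mul]
    rw [hP, hR, hS]
    ring
  rw [← pow_add, ← pow_add, hE, pow_add, pow_add, pow_mul ζ mt, hζ, one_pow, mul_one]

lemma key3 (ζ : ℂ) (mr ms mt A αt βt βs γs γr δr : ℕ)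
    (hg : 0 < Nat.gcd (Nat.gcd mr ms) mt) (hζ : ζ ^ Nat.gcd (Nat.gcd mr ms) mt = 1) :
    ζ ^ (-((A * δr * γs * βt : ℕ) : ℤ)) * ζ ^ (-((A * δr * ((βs + γs) % ms) * αt : ℕ) : ℤ)) *
      ζ ^ (-((A * γr * βs * αt : ℕ) : ℤ)) =
    ζ ^ (-((A * δr * γs * ((αt + βt) % mt) : ℕ) : ℤ)) *
      ζ ^ (-((A * ((γr + δr) % mr) * βs * αt : ℕ) : ℤ)) := by
  set g := Nat.gcd (Nat.gcd mr ms) mt with hgdef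
  have hζ0 : ζ ≠ 0 := by
    intro h
    rw [h, zero_pow hg.ne'] at hζ
    exact zero_ne_one hζ
  obtain ⟨mr1, hmr1⟩ : g ∣ mr := (Nat.gcd_dvd_left _ _).trans (Nat.gcd_dvd_left _ _)
  obtain ⟨ms1, hms1⟩ : g ∣ ms := (Nat.gcd_dvd_left _ _).trans (Nat.gcd_dvd_right _ _)
  obtain ⟨mt1, hmt1⟩ : g ∣ mt := Nat.gcd_dvd_right _ _
  have h1c := congrArg (Nat.cast (R := ℤ)) (Nat.mod_add_div (βs + γs) ms)
  have h2c := congrArg (Nat.cast (R := ℤ)) (Nat.mod_add_div (αt + βt) mt)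
  have h3c := congrArg (Nat.cast (R := ℤ)) (Nat.mod_add_div (γr + δr) mr)
  simp only [Nat.cast_add, Nat.cast_mul] at h1c h2c h3c
  have hS1 : ((((βs + γs) % ms) : ℕ) : ℤ) =
      (βs : ℤ) + (γs : ℤ) - (ms : ℤ) * (((βs + γs) / ms : ℕ) : ℤ) := by linarith
  have hS2 : ((((αt + βt) % mt) : ℕ) : ℤ) =
      (αt : ℤ) + (βt : ℤ) - (mt : ℤ) * (((αt + βt) / mt : ℕ) : ℤ) := by linarith
  have hS3 : ((((γr + δr) % mr) : ℕ) : ℤ) =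
      (γr : ℤ) + (δr : ℤ) - (mr : ℤ) * (((γr + δr) / mr : ℕ) : ℤ) := by linarith
  have hr : (mr : ℤ) = (g : ℤ) * (mr1 : ℤ) := by exact_mod_cast congrArg (Nat.cast (R := ℤ)) hmr1
  have hs : (ms : ℤ) = (g : ℤ) * (ms1 : ℤ) := by exact_mod_cast congrArg (Nat.cast (R := ℤ)) hms1
  have ht : (mt : ℤ) = (g : ℤ) * (mt1 : ℤ) := by exact_mod_cast congrArg (Nat.cast (R := ℤ)) hmt1
  rw [← zpow_add₀ hζ0, ← zpow_add₀ hζ0, ← zpow_add₀ hζ0]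
  apply my_zpow_eq_of_dvd ζ hζ0 g hζ
  refine ⟨(A : ℤ) * δr * ms1 * (((βs + γs) / ms : ℕ) : ℤ) * αt -
      (A : ℤ) * δr * γs * mt1 * (((αt + βt) / mt : ℕ) : ℤ) -
      (A : ℤ) * mr1 * (((γr + δr) / mr : ℕ) : ℤ) * βs * αt, ?_⟩
  simp only [Nat.cast_mul]
  rw [hS1, hS2, hS3, hr, hs, ht]
  ring

lemma comb {P1 P2 P3 P4 P5 Q1 Q2 Q3 Q4 Q5 R1 R2 R3 R4 R5 : ℂ}
    (h1 : P1 * P2 * P3 = P4 * P5) (h2 : Q1 * Q2 * Q3 = Q4 * Q5)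
    (h3 : R1 * R2 * R3 = R4 * R5) :
    (P1 * Q1 * R1) * (P2 * Q2 * R2) * (P3 * Q3 * R3) = (P4 * Q4 * R4) * (P5 * Q5 * R5) := by
  calc (P1 * Q1 * R1) * (P2 * Q2 * R2) * (P3 * Q3 * R3)
      = (P1 * P2 * P3) * (Q1 * Q2 * Q3) * (R1 * R2 * R3) := by ring
    _ = (P4 * P5) * (Q4 * Q5) * (R4 * R5) := by rw [h1, h2, h3]
    _ = (P4 * Q4 * R4) * (P5 * Q5 * R5) := by ring

/-- `Φ_a` is a normalized 3-cocycle on `Z_{m_1} × ⋯ × Z_{m_n}` (written additively). -/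
theorem stmt_2 {n : ℕ} (m : Fin n → ℕ) (hm : ∀ l, 0 < m l)
    (a1 : Fin n → ℕ) (a2 : Fin n → Fin n → ℕ) (a3 : Fin n → Fin n → Fin n → ℕ)
    (ha1 : ∀ l, a1 l < m l)
    (ha2 : ∀ s t : Fin n, s < t → a2 s t < Nat.gcd (m s) (m t))
    (ha3 : ∀ r s t : Fin n, r < s → s < t →
      a3 r s t < Nat.gcd (Nat.gcd (m r) (m s)) (m t)) :
    (∀ a b c d : ∀ l, ZMod (m l),
        Phi3 m a1 a2 a3 b c d * Phi3 m a1 a2 a3 a (b + c) d * Phi3 m a1 a2 a3 a b c =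
        Phi3 m a1 a2 a3 (a + b) c d * Phi3 m a1 a2 a3 a b (c + d)) ∧
    (∀ a b : ∀ l, ZMod (m l), Phi3 m a1 a2 a3 a 0 b = 1) := by
  haveI : ∀ l, NeZero (m l) := fun l => ⟨(hm l).ne'⟩
  have hzm : ∀ l, zeta (m l) ^ (m l) = 1 := fun l => zeta_pow_self (m l) (hm l).ne'
  have hgpos : ∀ r s t : Fin n, 0 < Nat.gcd (Nat.gcd (m r) (m s)) (m t) :=
    fun r s t => Nat.gcd_pos_of_pos_right _ (hm t)
  have hzg : ∀ r s t : Fin n,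
      zeta (Nat.gcd (Nat.gcd (m r) (m s)) (m t)) ^ Nat.gcd (Nat.gcd (m r) (m s)) (m t) = 1 :=
    fun r s t => zeta_pow_self _ (hgpos r s t).ne'
  constructor
  · intro a b c d
    simp only [Phi3, Pi.add_apply, ZMod.val_add]
    refine comb ?_ ?_ ?_
    · rw [← Finset.prod_mul_distrib, ← Finset.prod_mul_distrib, ← Finset.prod_mul_distrib]
      refine Finset.prod_congr rfl fun l _ => ?_
      exact key2 (zeta (m l)) (m l) (m l) (a1 l) (a l).val (b l).val (b l).val (c l).val
        (d l).val (hm l) (hzm l)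
    · simp only [← Finset.prod_mul_distrib]
      refine Finset.prod_congr rfl fun s _ => Finset.prod_congr rfl fun t _ => ?_
      by_cases hst : s < t
      · simp only [if_pos hst]
        exact key2 (zeta (m t)) (m s) (m t) (a2 s t) (a t).val (b t).val (b s).val (c s).val
          (d s).val (hm s) (hzm t)
      · simp [hst]
    · simp only [← Finset.prod_mul_distrib]
      refine Finset.prod_congr rfl fun r _ => Finset.prod_congr rfl fun s _ =>
        Finset.prod_congr rfl fun t _ => ?_
      by_cases hrst : r < s ∧ s < t
      · simp only [if_pos hrst]
        exact key3 (zeta (Nat.gcd (Nat.gcd (m r) (m s)) (m t))) (m r) (m s) (m t) (a3 r s t)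
          (a t).val (b t).val (b s).val (c s).val (c r).val (d r).val (hgpos r s t)
          (hzg r s t)
      · simp [hrst]
  · intro a b
    simp only [Phi3, Pi.zero_apply, ZMod.val_zero]
    have h1 : (∏ l, zeta (m l) ^ (a1 l * (a l).val * ((0 + (b l).val) / m l))) = 1 :=
      Finset.prod_eq_one fun l _ => by
        rw [zero_add, Nat.div_eq_of_lt (ZMod.val_lt _), Nat.mul_zero, pow_zero]
    have h2 : (∏ s, ∏ t, if s < t then
        zeta (m t) ^ (a2 s t * (a t).val * ((0 + (b s).val) / m s)) else 1) = 1 :=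
      Finset.prod_eq_one fun s _ => Finset.prod_eq_one fun t _ => by
        rw [zero_add, Nat.div_eq_of_lt (ZMod.val_lt _), Nat.mul_zero, pow_zero, ite_self]
    have h3 : (∏ r, ∏ s, ∏ t, if r < s ∧ s < t then
        zeta (Nat.gcd (Nat.gcd (m r) (m s)) (m t)) ^
          (-((a3 r s t * (b r).val * 0 * (a t).val : ℕ) : ℤ)) else 1) = 1 :=
      Finset.prod_eq_one fun r _ => Finset.prod_eq_one fun s _ =>
        Finset.prod_eq_one fun t _ => by
          rw [Nat.mul_zero, Nat.zero_mul, Nat.cast_zero, neg_zero, zpow_zero, ite_self]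
    rw [h1, h2, h3, one_mul, one_mul]
end

section
/- Let G = Z_{m_1} × ⋯ × Z_{m_k} with fixed generators g_1,…,g_k, and let K_• be the tensor product over i of the periodic resolutions of Z over Z[Z_{m_i}] (with free generators Ψ(a_1,…,a_k) in degree a_1+⋯+a_k and differentials d_i(Ψ(a_1,…,a_k)) equal to 0 if a_i = 0, (−1)^{∑_{l<i}a_l}·N_i·Ψ(…,a_i−1,…) if a_i is nonzero and even, and (−1)^{∑_{l<i}a_l}·T_i·Ψ(…,a_i−1,…) if a_i is odd, where T_i = g_i − 1 and N_i = ∑_{j=0}^{m_i−1} g_i^j). A 3-cochain f ∈ Hom_{ZG}(K_3, k*) is a 3-cocycle if and only if for all 1 ≤ r ≤ k, 1 ≤ r < s ≤ k, and 1 ≤ r < s < t ≤ k: f_{r,r,r}^{m_r} = 1, f_{r,s,s}^{m_r}·f_{r,r,s}^{m_s} = 1, and f_{r,s,t}^{m_r} = f_{r,s,t}^{m_s} = f_{r,s,t}^{m_t} = 1. -/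
open Finset

/-- The multi-index `Ψ_{r,s,t}` (as a function `Fin N → ℕ`), with repetitions allowed. -/
def idx3 {N : ℕ} (r s t : Fin N) : Fin N → ℕ :=
  fun i => (if i = r then 1 else 0) + (if i = s then 1 else 0) + (if i = t then 1 else 0)

/-- The value of `f ∘ d` on the free generator `Ψ_b` of the tensor-product resolution, for a
`ℤG`-linear cochain `f` with values in the trivial module `kˣ`: `T_i = g_i - 1` contributes
trivially and `N_i = ∑_j g_i^j` contributes the `(±m_i)`-th power. -/
noncomputable def delta3 {k : Type*} [Field k] {N : ℕ} (m : Fin N → ℕ)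
    (f : (Fin N → ℕ) → kˣ) (b : Fin N → ℕ) : kˣ :=
  ∏ i, if b i ≠ 0 ∧ Even (b i) then
      f (Function.update b i (b i - 1)) ^
        ((-1 : ℤ) ^ (∑ l ∈ Finset.univ.filter (fun l => l < i), b l) * (m i : ℤ))
    else 1

section Aux

variable {k : Type*} [Field k] {N : ℕ}

/-- indicator multi-index -/
def ind {N : ℕ} (j : Fin N) : Fin N → ℕ := fun i => if i = j then 1 else 0

lemma sum_ind (j : Fin N) : ∑ i, ind j i = 1 := by simp [ind]

lemma pow_sign (x : kˣ) (e M : ℕ) :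
    x ^ ((-1 : ℤ) ^ e * (M : ℤ)) = 1 ↔ x ^ M = 1 := by
  rw [mul_comm, zpow_mul, zpow_natCast]
  rcases Nat.even_or_odd e with he | he
  · rw [he.neg_one_pow, zpow_one]
  · rw [he.neg_one_pow, zpow_neg_one, inv_eq_one]

lemma idx3_swap (x y z : Fin N) : idx3 x y z = idx3 y x z := by
  funext i; simp only [idx3]; ring

lemma idx3_rot (x y z : Fin N) : idx3 x y z = idx3 y z x := by
  funext i; simp only [idx3]; ring

lemma idx3_swap23 (x y z : Fin N) : idx3 x y z = idx3 x z y := by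
  funext i; simp only [idx3]; ring

lemma delta3_trivial (m : Fin N → ℕ) (f : (Fin N → ℕ) → kˣ) (b : Fin N → ℕ)
    (h : ∀ i, ¬(b i ≠ 0 ∧ Even (b i))) : delta3 m f b = 1 := by
  unfold delta3
  exact Finset.prod_eq_one fun i _ => if_neg (h i)

lemma delta3_single (m : Fin N → ℕ) (f : (Fin N → ℕ) → kˣ) (b : Fin N → ℕ)
    (j : Fin N) (hj : b j ≠ 0 ∧ Even (b j))
    (h : ∀ i, i ≠ j → ¬(b i ≠ 0 ∧ Even (b i))) :
    delta3 m f b = f (Function.update b j (b j - 1)) ^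
      ((-1 : ℤ) ^ (∑ l ∈ Finset.univ.filter (fun l => l < j), b l) * (m j : ℤ)) := by
  unfold delta3
  rw [Finset.prod_eq_single_of_mem j (mem_univ j)
    (fun x _ hx => if_neg (h x hx)), if_pos hj]

/-- The case `b = 4·e_r`. -/
lemma delta3_four_iff (m : Fin N → ℕ) (f : (Fin N → ℕ) → kˣ) (b : Fin N → ℕ)
    (r : Fin N) (hb : ∀ i, b i = 4 * ind r i) :
    (delta3 m f b = 1 ↔ f (idx3 r r r) ^ (m r) = 1) := by
  have hbr : b r = 4 := by simp [hb r, ind]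
  have hb0 : ∀ i, i ≠ r → b i = 0 := by
    intro i hi; simp [hb i, ind, hi]
  have hupd : Function.update b r (b r - 1) = idx3 r r r := by
    funext i
    rcases eq_or_ne i r with rfl | hi
    · simp [idx3, hbr]
    · simp [Function.update_of_ne hi, idx3, hi, hb0 i hi]
  rw [delta3_single m f b r ⟨by omega, by rw [hbr]; decide⟩
    (fun i hi => by simp [hb0 i hi]), hupd]
  exact pow_sign _ _ _

/-- The case `b = 2·e_p + e_u + e_v` with `p, u, v` pairwise distinct. -/
lemma delta3_211_iff (m : Fin N → ℕ) (f : (Fin N → ℕ) → kˣ) (b : Fin N → ℕ)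
    (p u v : Fin N) (hpu : p ≠ u) (hpv : p ≠ v) (huv : u ≠ v)
    (hb : ∀ i, b i = 2 * ind p i + ind u i + ind v i) :
    (delta3 m f b = 1 ↔ f (idx3 p u v) ^ (m p) = 1) := by
  have hbp : b p = 2 := by simp [hb p, ind, hpu, hpv]
  have hb1 : ∀ i, i ≠ p → ¬(b i ≠ 0 ∧ Even (b i)) := by
    intro i hi
    have := hb i
    simp only [ind, if_neg (show i ≠ p from hi)] at this
    rintro ⟨h0, h2⟩
    rw [Nat.even_iff] at h2
    rcases eq_or_ne i u with rfl | hu <;> rcases eq_or_ne i v with rfl | hv <;>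
      simp_all <;> omega
  have hupd : Function.update b p (b p - 1) = idx3 p u v := by
    funext i
    rcases eq_or_ne i p with rfl | hi
    · simp [idx3, hbp, hpu, hpv]
    · have := hb i
      simp only [ind, if_neg hi] at this
      simp [Function.update_of_ne hi, idx3, this, if_neg hi]
  rw [delta3_single m f b p ⟨by omega, by rw [hbp]; decide⟩ hb1, hupd]
  exact pow_sign _ _ _

/-- The case `b = 2·e_r + 2·e_s`, `r < s`. -/
lemma delta3_22 (m : Fin N → ℕ) (f : (Fin N → ℕ) → kˣ) (b : Fin N → ℕ)
    (r s : Fin N) (hrs : r < s) (hb : ∀ i, b i = 2 * ind r i + 2 * ind s i) :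
    delta3 m f b = f (idx3 r s s) ^ (m r) * f (idx3 r r s) ^ (m s) := by
  have hrs' : r ≠ s := ne_of_lt hrs
  have hbr : b r = 2 := by simp [hb r, ind, hrs']
  have hbs : b s = 2 := by simp [hb s, ind, hrs'.symm]
  have hb0 : ∀ i, i ≠ r → i ≠ s → b i = 0 := by
    intro i h1 h2; simp [hb i, ind, h1, h2]
  have hupr : Function.update b r (b r - 1) = idx3 r s s := by
    funext i
    rcases eq_or_ne i r with rfl | hi
    · simp [idx3, hbr, hrs']
    · rcases eq_or_ne i s with rfl | hi2
      · simp [Function.update_of_ne hi, idx3, hbs, hrs'.symm]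
      · simp [Function.update_of_ne hi, idx3, hi, hi2, hb0 i hi hi2]
  have hups : Function.update b s (b s - 1) = idx3 r r s := by
    funext i
    rcases eq_or_ne i s with rfl | hi
    · simp [idx3, hbs, hrs'.symm]
    · rcases eq_or_ne i r with rfl | hi2
      · simp [Function.update_of_ne hi, idx3, hbr, hrs']
      · simp [Function.update_of_ne hi, idx3, hi, hi2, hb0 i hi2 hi]
  have hsumr : (∑ l ∈ Finset.univ.filter (fun l => l < r), b l) = 0 := by
    apply Finset.sum_eq_zero
    intro l hl
    rw [mem_filter] at hl
    exact hb0 l (ne_of_lt hl.2) (ne_of_lt (hl.2.trans hrs))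
  have hsums : (∑ l ∈ Finset.univ.filter (fun l => l < s), b l) = 2 := by
    have : ∀ l ∈ Finset.univ.filter (fun l => l < s), b l = if l = r then 2 else 0 := by
      intro l hl
      rw [mem_filter] at hl
      rcases eq_or_ne l r with rfl | h
      · simp [hbr]
      · simp [hb0 l h (ne_of_lt hl.2), h]
    rw [Finset.sum_congr rfl this, Finset.sum_ite_eq' _ r (fun _ => 2)]
    simp [hrs]
  unfold delta3
  rw [Finset.prod_eq_mul_of_mem r s (mem_univ r) (mem_univ s) hrs'
    (fun i _ hi => if_neg (by rintro ⟨h0, _⟩; exact h0 (hb0 i hi.1 hi.2)))]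
  rw [if_pos ⟨by omega, by rw [hbr]; decide⟩, if_pos ⟨by omega, by rw [hbs]; decide⟩,
    hupr, hups, hsumr, hsums]
  norm_num [zpow_natCast]

/-- extraction of the minimal index of the support -/
lemma extract (b : Fin N → ℕ) (n : ℕ) (h : ∑ i, b i = n + 1) :
    ∃ (j : Fin N) (c : Fin N → ℕ), (∀ i, b i = c i + ind j i) ∧ (∑ i, c i = n) ∧ (∀ i, c i ≠ 0 → j ≤ i) := by
  have hne : (univ.filter (fun i => b i ≠ 0)).Nonempty := by
    by_contra hc
    rw [Finset.not_nonempty_iff_eq_empty, Finset.filter_eq_empty_iff] at hc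
    have h0 : ∑ i, b i = 0 := Finset.sum_eq_zero fun i _ => by
      have := hc (mem_univ i); simpa using this
    omega
  set j := (univ.filter (fun i => b i ≠ 0)).min' hne with hj
  have hbj : b j ≠ 0 := by
    have := Finset.min'_mem _ hne
    rw [mem_filter] at this
    exact this.2
  refine ⟨j, Function.update b j (b j - 1), ?_, ?_, ?_⟩
  · intro i
    rcases eq_or_ne i j with rfl | hi
    · simp [ind]; omega
    · simp [ind, Function.update_of_ne hi, hi]
  · have hpt : ∀ i, b i = Function.update b j (b j - 1) i + ind j i := by
      intro i
      rcases eq_or_ne i j with rfl | hi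
      · simp [ind]; omega
      · simp [ind, Function.update_of_ne hi, hi]
    have : ∑ i, b i = (∑ i, Function.update b j (b j - 1) i) + 1 := by
      rw [Finset.sum_congr rfl (fun i _ => hpt i), Finset.sum_add_distrib, sum_ind]
    omega
  · intro i hi
    rcases eq_or_ne i j with rfl | hne'
    · exact le_refl _
    · apply Finset.min'_le
      rw [mem_filter]
      refine ⟨mem_univ i, ?_⟩
      rw [Function.update_of_ne hne'] at hi
      exact hi

/-- for pairwise distinct indices, `f(idx3 x y z) ^ m x = 1` follows from the cocycle data -/
lemma h3_any (m : Fin N → ℕ) (f : (Fin N → ℕ) → kˣ)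
    (h3 : ∀ r s t : Fin N, r < s → s < t →
        f (idx3 r s t) ^ (m r) = 1 ∧ f (idx3 r s t) ^ (m s) = 1 ∧
        f (idx3 r s t) ^ (m t) = 1)
    (x y z : Fin N) (hxy : x ≠ y) (hxz : x ≠ z) (hyz : y ≠ z) :
    f (idx3 x y z) ^ (m x) = 1 := by
  rcases lt_or_gt_of_ne hxy with h1 | h1 <;> rcases lt_or_gt_of_ne hxz with h2 | h2 <;>
    rcases lt_or_gt_of_ne hyz with h3' | h3'
  · exact (h3 x y z h1 h3').1
  · rw [idx3_swap23 x y z]; exact (h3 x z y h2 h3').1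
  · exact absurd ((h2.trans h1).trans h3') (lt_irrefl z)
  · rw [← idx3_rot z x y]; exact (h3 z x y h2 h1).2.1
  · rw [idx3_swap x y z]; exact (h3 y x z h1 h2).2.1
  · exact absurd ((h3'.trans h1).trans h2) (lt_irrefl z)
  · rw [idx3_rot x y z]; exact (h3 y z x h3' h2).2.2
  · rw [idx3_swap23 x y z, idx3_rot x z y]; exact (h3 z y x h3' h1).2.2

end Aux

/-- A 3-cochain `f ∈ Hom_{ℤG}(K₃, kˣ)` is a cocycle (i.e. `f ∘ d = 1` on `K₄`) iff
`f_{r,r,r}^{m_r} = 1`, `f_{r,s,s}^{m_r}·f_{r,r,s}^{m_s} = 1`, and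
`f_{r,s,t}^{m_r} = f_{r,s,t}^{m_s} = f_{r,s,t}^{m_t} = 1`. -/
theorem stmt_5 {k : Type*} [Field k] {N : ℕ} (m : Fin N → ℕ) (hm : ∀ i, 0 < m i)
    (f : (Fin N → ℕ) → kˣ) :
    (∀ b : Fin N → ℕ, (∑ i, b i) = 4 → delta3 m f b = 1) ↔
    ((∀ r : Fin N, f (idx3 r r r) ^ (m r) = 1) ∧
     (∀ r s : Fin N, r < s → f (idx3 r s s) ^ (m r) * f (idx3 r r s) ^ (m s) = 1) ∧
     (∀ r s t : Fin N, r < s → s < t →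
        f (idx3 r s t) ^ (m r) = 1 ∧ f (idx3 r s t) ^ (m s) = 1 ∧
        f (idx3 r s t) ^ (m t) = 1)) := by
  constructor
  · intro h
    refine ⟨?_, ?_, ?_⟩
    · intro r
      have hs : ∑ i, (fun i => 4 * ind r i) i = 4 := by
        simp only [← Finset.mul_sum, sum_ind]
        norm_num
      exact (delta3_four_iff m f _ r (fun i => rfl)).mp (h _ hs)
    · intro r s hrs
      have hs : ∑ i, (fun i => 2 * ind r i + 2 * ind s i) i = 4 := by
        simp only [Finset.sum_add_distrib, ← Finset.mul_sum, sum_ind]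
        norm_num
      have := h _ hs
      rwa [delta3_22 m f _ r s hrs (fun i => rfl)] at this
    · intro r s t hrs hst
      have hrt : r < t := hrs.trans hst
      have hs1 : ∀ p u v : Fin N,
          ∑ i, (fun i => 2 * ind p i + ind u i + ind v i) i = 4 := by
        intro p u v
        simp only [Finset.sum_add_distrib, ← Finset.mul_sum, sum_ind]
        norm_num
      refine ⟨?_, ?_, ?_⟩
      · exact (delta3_211_iff m f _ r s t (ne_of_lt hrs) (ne_of_lt hrt)
          (ne_of_lt hst) (fun i => rfl)).mp (h _ (hs1 r s t))
      · have := (delta3_211_iff m f _ s r t (ne_of_lt hrs).symm (ne_of_lt hst)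
          (ne_of_lt hrt) (fun i => rfl)).mp (h _ (hs1 s r t))
        rwa [idx3_swap] at this
      · have := (delta3_211_iff m f _ t r s (ne_of_lt hrt).symm (ne_of_lt hst).symm
          (ne_of_lt hrs) (fun i => rfl)).mp (h _ (hs1 t r s))
        rwa [idx3_rot] at this
  · rintro ⟨h1, h2, h3⟩ b hb4
    obtain ⟨a1, c1, e1, s1, min1⟩ := extract b 3 hb4
    obtain ⟨a2, c2, e2, s2, min2⟩ := extract c1 2 s1
    obtain ⟨a3, c3, e3, s3, min3⟩ := extract c2 1 s2
    obtain ⟨a4, c4, e4, s4, min4⟩ := extract c3 0 s3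
    have hc4 : ∀ i, c4 i = 0 := by
      intro i
      exact Finset.sum_eq_zero_iff.mp s4 i (mem_univ i)
    have hb : ∀ i, b i = ind a1 i + ind a2 i + ind a3 i + ind a4 i := by
      intro i
      rw [e1 i, e2 i, e3 i, e4 i, hc4 i]
      ring
    have h12 : a1 ≤ a2 := min1 a2 (by rw [e2 a2]; simp [ind])
    have h23 : a2 ≤ a3 := min2 a3 (by rw [e3 a3]; simp [ind])
    have h34 : a3 ≤ a4 := min3 a4 (by rw [e4 a4]; simp [ind])
    rcases h12.eq_or_lt with q12 | q12
    · rcases h23.eq_or_lt with q23 | q23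
      · rcases h34.eq_or_lt with q34 | q34
        · -- a1 = a2 = a3 = a4 : b = 4 e
          subst q12; subst q23; subst q34
          exact (delta3_four_iff m f b a1
            (fun i => by
              rcases eq_or_ne i a1 with hx | hx
              · rw [hx]; simp [hb a1, ind]
              · simp [hb i, ind, hx])).mpr (h1 a1)
        · -- a1 = a2 = a3 < a4 : entries 3 and 1, trivial
          subst q12; subst q23
          apply delta3_trivial
          intro i
          rintro ⟨h0, he⟩
          rcases eq_or_ne i a1 with x1 | x1
          · have hv : b i = 3 := by rw [x1]; simp [hb a1, ind, ne_of_lt q34]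
            rw [hv] at he
            exact absurd he (by decide)
          · rcases eq_or_ne i a4 with x2 | x2
            · have hv : b i = 1 := by rw [x2]; simp [hb a4, ind, (ne_of_lt q34).symm]
              rw [hv] at he
              exact absurd he (by decide)
            · exact h0 (by simp [hb i, ind, x1, x2])
      · rcases h34.eq_or_lt with q34 | q34
        · -- a1 = a2 < a3 = a4 : 2 + 2
          subst q12; subst q34
          rw [delta3_22 m f b a1 a3 q23 (fun i => by rw [hb i]; ring)]
          exact h2 a1 a3 q23
        · -- a1 = a2 < a3 < a4 : 2 + 1 + 1
          subst q12
          rw [delta3_211_iff m f b a1 a3 a4 (ne_of_lt q23) (ne_of_lt (q23.trans q34))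
            (ne_of_lt q34) (fun i => by rw [hb i]; ring)]
          exact h3_any m f h3 a1 a3 a4 (ne_of_lt q23) (ne_of_lt (q23.trans q34))
            (ne_of_lt q34)
    · rcases h23.eq_or_lt with q23 | q23
      · rcases h34.eq_or_lt with q34 | q34
        · -- a1 < a2 = a3 = a4 : 1 + 3, trivial
          subst q23; subst q34
          apply delta3_trivial
          intro i
          rintro ⟨h0, he⟩
          rcases eq_or_ne i a1 with x1 | x1
          · have hv : b i = 1 := by rw [x1]; simp [hb a1, ind, ne_of_lt q12]
            rw [hv] at he
            exact absurd he (by decide)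
          · rcases eq_or_ne i a2 with x2 | x2
            · have hv : b i = 3 := by rw [x2]; simp [hb a2, ind, (ne_of_lt q12).symm]
              rw [hv] at he
              exact absurd he (by decide)
            · exact h0 (by simp [hb i, ind, x1, x2])
        · -- a1 < a2 = a3 < a4 : 1 + 2 + 1
          subst q23
          rw [delta3_211_iff m f b a2 a1 a4 (ne_of_lt q12).symm (ne_of_lt q34)
            (ne_of_lt (q12.trans q34)) (fun i => by rw [hb i]; ring)]
          exact h3_any m f h3 a2 a1 a4 (ne_of_lt q12).symm (ne_of_lt q34)
            (ne_of_lt (q12.trans q34))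
      · rcases h34.eq_or_lt with q34 | q34
        · -- a1 < a2 < a3 = a4 : 1 + 1 + 2
          subst q34
          rw [delta3_211_iff m f b a3 a1 a2 (ne_of_lt (q12.trans q23)).symm
            (ne_of_lt q23).symm (ne_of_lt q12) (fun i => by rw [hb i]; ring)]
          exact h3_any m f h3 a3 a1 a2 (ne_of_lt (q12.trans q23)).symm
            (ne_of_lt q23).symm (ne_of_lt q12)
        · -- all distinct : 1+1+1+1, trivial
          have d12 := ne_of_lt q12
          have d23 := ne_of_lt q23
          have d34 := ne_of_lt q34
          have d13 := ne_of_lt (q12.trans q23)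
          have d24 := ne_of_lt (q23.trans q34)
          have d14 := ne_of_lt ((q12.trans q23).trans q34)
          apply delta3_trivial
          intro i
          rintro ⟨h0, he⟩
          rcases eq_or_ne i a1 with x1 | x1
          · have hv : b i = 1 := by rw [x1]; simp [hb a1, ind, d12, d13, d14]
            rw [hv] at he
            exact absurd he (by decide)
          rcases eq_or_ne i a2 with x2 | x2
          · have hv : b i = 1 := by rw [x2]; simp [hb a2, ind, d12.symm, d23, d24]
            rw [hv] at he
            exact absurd he (by decide)
          rcases eq_or_ne i a3 with x3 | x3
          · have hv : b i = 1 := by rw [x3]; simp [hb a3, ind, d13.symm, d23.symm, d34]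
            rw [hv] at he
            exact absurd he (by decide)
          rcases eq_or_ne i a4 with x4 | x4
          · have hv : b i = 1 := by rw [x4]; simp [hb a4, ind, d14.symm, d24.symm, d34.symm]
            rw [hv] at he
            exact absurd he (by decide)
          exact h0 (by simp [hb i, ind, x1, x2, x3, x4])
end

section
/- Let G be a finite abelian group with normalized 3-cocycle Φ taking values in k*. For any g, x, y ∈ G define θ_g(x,y) = Φ(g,x,y)·Φ(x,y,g)/Φ(x,g,y) (using that G is abelian, so g^x = g). If Φ(x,y,z) = Φ(x,z,y) for all x,y,z ∈ G, then θ_g(x,y) = θ_g(y,x) for all g,x,y ∈ G. -/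
/-- Let `Φ` be a normalized 3-cocycle on a finite abelian group `G` with values in `kˣ`, and
for `g, x, y ∈ G` let `θ_g(x,y) = Φ(g,x,y)·Φ(x,y,g)/Φ(x,g,y)`. If `Φ(x,y,z) = Φ(x,z,y)`
for all `x, y, z`, then `θ_g(x,y) = θ_g(y,x)` for all `g, x, y`. -/
theorem stmt_10 {k : Type*} [Field k] {G : Type*} [CommGroup G] [Fintype G]
    (Φ : G → G → G → kˣ)
    (hcocycle : ∀ a b c d : G,
      Φ b c d * Φ a (b * c) d * Φ a b c = Φ (a * b) c d * Φ a b (c * d))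
    (hnorm : ∀ a b : G, Φ a 1 b = 1)
    (hsym : ∀ x y z : G, Φ x y z = Φ x z y) :
    ∀ g x y : G,
      Φ g x y * Φ x y g / Φ x g y = Φ g y x * Φ y x g / Φ y g x := by
  intro g x y
  rw [hsym x y g, hsym y x g, mul_div_cancel_right, mul_div_cancel_right, hsym g x y]
end

section
/- Let 𝕞, m be positive integers with m = 𝕞². For integers 0 ≤ x, y, z < m with y', z' the remainders of y, z modulo 𝕞, and any integer a, the following identity of m-th roots of unity holds: ζ_m^{a·y·(z−z')} · ζ_m^{a·x·((y+z) − (y+z)'')} · ζ_m^{−a·(x+y)·(z−z')} · ζ_m^{−a·x·(y−y')} = ζ_𝕞^{a·x'·⌊(y'+z')/𝕞⌋}, where (y+z)'' denotes the remainder of y+z modulo 𝕞, x' the remainder of x modulo 𝕞, all sums x+y and y+z are taken modulo m in the group Z_m, and ζ_m = e^{2πi/m}, ζ_𝕞 = ζ_m^𝕞. -/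
lemma zeta_zpow_congr {m : ℕ} (hm : m ≠ 0) {a b : ℤ} (h : (m : ℤ) ∣ b - a) :
    zeta m ^ a = zeta m ^ b := by
  have hne : zeta m ≠ 0 := Complex.exp_ne_zero _
  have hprim := Complex.isPrimitiveRoot_exp m hm
  have h1 : zeta m ^ (m : ℤ) = 1 := by
    rw [zpow_natCast]; exact hprim.pow_eq_one
  obtain ⟨k, hk⟩ := h
  have hb : b = a + (m : ℤ) * k := by linarith
  rw [hb, zpow_add₀ hne, zpow_mul, h1, one_zpow, mul_one]

/-- The computational core of the rank-one resolution: for `m = 𝕞²`, `0 ≤ x,y,z < m`, and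
any integer `a`,
`ζ_m^{a·y·(z−z')} · ζ_m^{a·x·((y+z)−(y+z)'')} · ζ_m^{−a·(x+y)·(z−z')} · ζ_m^{−a·x·(y−y')}
  = ζ_𝕞^{a·x'·⌊(y'+z')/𝕞⌋}`, where `'` is reduction mod `𝕞`, `''` is reduction of the sum
mod `𝕞`, sums `x+y`, `y+z` are taken mod `m`, and `ζ_𝕞 = ζ_m^𝕞`. -/
theorem stmt_13 (mm m : ℕ) (hmm : 0 < mm) (hm : m = mm ^ 2)
    (x y z : ℕ) (hx : x < m) (hy : y < m) (hz : z < m) (a : ℤ) :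
    zeta m ^ (a * (y : ℤ) * ((z : ℤ) - ((z % mm : ℕ) : ℤ))) *
      zeta m ^ (a * (x : ℤ) * ((((y + z) % m : ℕ) : ℤ) - (((y + z) % mm : ℕ) : ℤ))) *
      zeta m ^ (-(a * (((x + y) % m : ℕ) : ℤ) * ((z : ℤ) - ((z % mm : ℕ) : ℤ)))) *
      zeta m ^ (-(a * (x : ℤ) * ((y : ℤ) - ((y % mm : ℕ) : ℤ)))) =
    (zeta m ^ (mm : ℤ)) ^
      (a * ((x % mm : ℕ) : ℤ) * (((y % mm + z % mm) / mm : ℕ) : ℤ)) := by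
  have hmne : m ≠ 0 := by
    rw [hm]; positivity
  have hne : zeta m ≠ 0 := Complex.exp_ne_zero _
  rw [← zpow_add₀ hne, ← zpow_add₀ hne, ← zpow_add₀ hne, ← zpow_mul]
  apply zeta_zpow_congr hmne
  -- integer facts
  have i1 : (((x + y) % m : ℕ) : ℤ) = (x : ℤ) + y - m * (((x + y) / m : ℕ) : ℤ) := by
    have h0 := Nat.mod_add_div (x + y) m
    have h1 : (((x + y) % m : ℕ) : ℤ) + m * (((x + y) / m : ℕ) : ℤ) = (x : ℤ) + y := by
      exact_mod_cast congrArg (fun n : ℕ => (n : ℤ)) h0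
    linarith
  have i2 : (((y + z) % m : ℕ) : ℤ) = (y : ℤ) + z - m * (((y + z) / m : ℕ) : ℤ) := by
    have h0 := Nat.mod_add_div (y + z) m
    have h1 : (((y + z) % m : ℕ) : ℤ) + m * (((y + z) / m : ℕ) : ℤ) = (y : ℤ) + z := by
      exact_mod_cast congrArg (fun n : ℕ => (n : ℤ)) h0
    linarith
  have i3 : ((y % mm : ℕ) : ℤ) + ((z % mm : ℕ) : ℤ) =
      mm * (((y % mm + z % mm) / mm : ℕ) : ℤ) + (((y + z) % mm : ℕ) : ℤ) := by
    have h0 : y % mm + z % mm = mm * ((y % mm + z % mm) / mm) + (y + z) % mm := by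
      rw [Nat.add_mod y z mm]; exact (Nat.div_add_mod _ _).symm
    exact_mod_cast congrArg (fun n : ℕ => (n : ℤ)) h0
  have i4 : (x : ℤ) = mm * ((x / mm : ℕ) : ℤ) + ((x % mm : ℕ) : ℤ) := by
    exact_mod_cast congrArg (fun n : ℕ => (n : ℤ)) (Nat.div_add_mod x mm).symm
  have hmz : (m : ℤ) = mm * mm := by rw [hm]; push_cast; ring
  refine ⟨a * x * (((y + z) / m : ℕ) : ℤ)
      - a * ((z : ℤ) - ((z % mm : ℕ) : ℤ)) * (((x + y) / m : ℕ) : ℤ)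
      - a * ((x / mm : ℕ) : ℤ) * (((y % mm + z % mm) / mm : ℕ) : ℤ), ?_⟩
  linear_combination (a * ((z : ℤ) - ((z % mm : ℕ) : ℤ))) * i1 + (-(a * (x : ℤ))) * i2 +
    (-(a * (x : ℤ))) * i3 + (-((mm : ℤ) * (((y % mm + z % mm) / mm : ℕ) : ℤ) * a)) * i4 +
    (a * ((x / mm : ℕ) : ℤ) * (((y % mm + z % mm) / mm : ℕ) : ℤ)) * hmz
end

section
/- Let G = Z_{m_1} × ⋯ × Z_{m_k} with generators g_1,…,g_k. Define the ZG-module map F_1 from the degree-1 part B_1 of the normalized bar resolution to the degree-1 part K_1 of the tensor-product periodic resolution by F_1([g₁^{i₁}⋯g_n^{i_n}]) = ∑_{s=1}^n ∑_{α_s=0}^{i_s−1} g₁^{i₁}⋯g_{s−1}^{i_{s−1}} g_s^{α_s} Ψ_s. Then d ∘ F_1 = ∂_1, i.e., d(F_1([g₁^{i₁}⋯g_n^{i_n}])) = (g₁^{i₁}⋯g_n^{i_n} − 1)·Ψ(0,…,0). -/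
open Finset

theorem tele {R} [CommRing R] {n : ℕ} (a : Fin n → R) :
    ∑ s : Fin n, (∏ l ∈ univ.filter (· < s), a l) * (a s - 1) = ∏ l, a l - 1 := by
  induction n with
  | zero => simp
  | succ n ih =>
    set e : Fin n ↪ Fin (n+1) := ⟨Fin.castSucc, Fin.castSucc_injective n⟩ with he
    rw [Fin.sum_univ_castSucc, Fin.prod_univ_castSucc]
    have h1 : ∀ t : Fin n, (univ.filter (· < Fin.castSucc t) : Finset (Fin (n+1)))
        = (univ.filter (· < t)).map e := by
      intro t; ext l
      induction l using Fin.lastCases with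
      | last =>
        simp only [mem_filter, mem_univ, true_and, mem_map, he,
          Function.Embedding.coeFn_mk]
        constructor
        · intro h; exact absurd h (by simp [Fin.lt_def])
        · rintro ⟨a', -, ha⟩; exact absurd ha (by simp [Fin.ext_iff]; omega)
      | cast l' =>
        simp only [mem_filter, mem_univ, true_and, mem_map, he,
          Function.Embedding.coeFn_mk, Fin.castSucc_lt_castSucc_iff]
        constructor
        · intro h; exact ⟨l', h, rfl⟩
        · rintro ⟨a', h, ha⟩; rwa [← Fin.castSucc_inj.mp ha]
    have h2 : (univ.filter (· < Fin.last n) : Finset (Fin (n+1)))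
        = univ.map e := by
      ext l
      induction l using Fin.lastCases with
      | last =>
        simp only [mem_filter, mem_univ, true_and, mem_map, he,
          Function.Embedding.coeFn_mk]
        constructor
        · intro h; exact absurd h (lt_irrefl _)
        · rintro ⟨a', ha⟩; exact absurd ha (by simp [Fin.ext_iff]; omega)
      | cast l' => simp [he, Fin.castSucc_lt_last]
    simp only [h1, h2, Finset.prod_map, he, Function.Embedding.coeFn_mk]
    rw [ih (fun l => a l.castSucc)]
    ring


/-- Claim 1 of the chain-map proposition: `d ∘ F₁ = ∂₁`. Evaluated on the bar-resolution
generator `[g₁^{i₁}⋯g_n^{i_n}]` and written in `K₀ ≅ ℤG` (with `Ψ(0,…,0)` the free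
generator), this is the identity
`∑ₛ ∑_{αₛ<iₛ} g₁^{i₁}⋯g_{s−1}^{i_{s−1}} g_s^{α_s}·(g_s − 1) = g₁^{i₁}⋯g_n^{i_n} − 1`
in the group ring `ℤ[Z_{m_1} × ⋯ × Z_{m_n}]`. -/
theorem stmt_15 {n : ℕ} (m : Fin n → ℕ) (hm : ∀ l, 0 < m l)
    (i : Fin n → ℕ) (hi : ∀ l, i l < m l) :
    (∑ s : Fin n, ∑ α ∈ Finset.range (i s),
        MonoidAlgebra.of ℤ (Multiplicative (∀ l, ZMod (m l)))
            ((∏ l ∈ Finset.univ.filter (fun l => l < s),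
                Multiplicative.ofAdd (Pi.single l 1 : ∀ l', ZMod (m l')) ^ i l) *
              Multiplicative.ofAdd (Pi.single s 1 : ∀ l', ZMod (m l')) ^ α) *
          (MonoidAlgebra.of ℤ (Multiplicative (∀ l, ZMod (m l)))
              (Multiplicative.ofAdd (Pi.single s 1 : ∀ l', ZMod (m l'))) - 1)) =
      MonoidAlgebra.of ℤ (Multiplicative (∀ l, ZMod (m l)))
          (∏ l, Multiplicative.ofAdd (Pi.single l 1 : ∀ l', ZMod (m l')) ^ i l) - 1 := by
  set of := MonoidAlgebra.of ℤ (Multiplicative (∀ l, ZMod (m l))) with hof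
  set g : Fin n → Multiplicative (∀ l', ZMod (m l')) :=
    fun s => Multiplicative.ofAdd (Pi.single s 1 : ∀ l', ZMod (m l')) with hg
  have key := tele (a := fun s => of (g s) ^ i s)
  calc (∑ s : Fin n, ∑ α ∈ Finset.range (i s),
        of ((∏ l ∈ univ.filter (fun l => l < s), g l ^ i l) * g s ^ α) * (of (g s) - 1))
      = ∑ s : Fin n, (∏ l ∈ univ.filter (· < s), of (g l) ^ i l)
          * ((∑ α ∈ Finset.range (i s), of (g s) ^ α) * (of (g s) - 1)) := by
        refine Finset.sum_congr rfl fun s _ => ?_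
        rw [Finset.sum_mul, Finset.mul_sum]
        refine Finset.sum_congr rfl fun α _ => ?_
        rw [map_mul, map_prod]
        simp [map_pow, mul_assoc]
    _ = ∑ s : Fin n, (∏ l ∈ univ.filter (· < s), of (g l) ^ i l)
          * (of (g s) ^ i s - 1) := by
        simp [geom_sum_mul]
    _ = ∏ l, of (g l) ^ i l - 1 := key
    _ = of (∏ l, g l ^ i l) - 1 := by rw [map_prod]; simp [map_pow]
end
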